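/- Let φ be a sequence of pivots applicable to a simple graph G, let S = sup(φ) be its support, and let x, y be distinct vertices of G. Then det((Gφ)[{x,y}]) = det(G[S ⊕ {x,y}]) over GF(2); consequently {x,y} is an edge of Gφ if and only if det(G[S ⊕ {x,y}]) = 1. -/

import Mathlib

set_option linter.unusedSectionVars false

variable {V : Type*} [Fintype V] [DecidableEq V]

/-- Local complementation at a vertex `w`: complement the edges within `N_G(w)`. -/
def SimpleGraph.localComp (G : SimpleGraph V) (w : V) : SimpleGraph V where
  Adj x y := x ≠ y ∧ Xor' (G.Adj x y) (G.Adj x w ∧ G.Adj y w)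
  symm := by
    constructor
    intro x y ⟨hne, hx⟩
    refine ⟨hne.symm, ?_⟩
    have h1 := G.adj_comm x y
    unfold Xor' at hx ⊢
    unfold Xor at hx ⊢
    tauto
  loopless := by constructor; intro x ⟨h, _⟩; exact h rfl

/-- `x ∼_G y` : `x = y` or `{x,y}` is an edge of `G`. -/
def SimpleGraph.nbr (G : SimpleGraph V) (x y : V) : Prop := x = y ∨ G.Adj x y

theorem SimpleGraph.nbr_comm (G : SimpleGraph V) (x y : V) : G.nbr x y ↔ G.nbr y x :=
  or_congr eq_comm (G.adj_comm x y)

private theorem xor_swap_right (a b c : Prop) : Xor' (Xor' a b) c ↔ Xor' (Xor' a c) b := by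
  unfold Xor'; unfold Xor; tauto

/-- The pivot `G[uv]` of `G` on an edge `{u,v}`, characterized by
`x ∼_{G[uv]} y ⟺ (x ∼_G y) XOR ((x ∼_G u) ∧ (y ∼_G v)) XOR ((x ∼_G v) ∧ (y ∼_G u))`. -/
def SimpleGraph.pivot (G : SimpleGraph V) (u v : V) : SimpleGraph V where
  Adj x y := x ≠ y ∧
    Xor' (Xor' (G.nbr x y) (G.nbr x u ∧ G.nbr y v)) (G.nbr x v ∧ G.nbr y u)
  symm := by
    constructor
    intro x y ⟨hne, hx⟩
    refine ⟨hne.symm, ?_⟩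
    show Xor' (Xor' (G.nbr y x) (G.nbr y u ∧ G.nbr x v)) (G.nbr y v ∧ G.nbr x u)
    rw [G.nbr_comm y x, and_comm (a := G.nbr y u) (b := G.nbr x v),
      and_comm (a := G.nbr y v) (b := G.nbr x u)]
    exact (xor_swap_right _ _ _).mp hx
  loopless := by constructor; intro x ⟨h, _⟩; exact h rfl

/-- Determinant over GF(2) of the adjacency matrix of the subgraph of `G` induced by `S`. -/
noncomputable def gdet (G : SimpleGraph V) (S : Finset V) : ZMod 2 := by
  classical
  exact Matrix.det (Matrix.of fun i j : S => if G.Adj i j then (1 : ZMod 2) else 0)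

/-- Apply a sequence of pivots (left to right). -/
def applyPivots (G : SimpleGraph V) : List (V × V) → SimpleGraph V
  | [] => G
  | p :: φ => applyPivots (G.pivot p.1 p.2) φ

/-- A sequence of pivots is applicable when each pair is an edge of the graph
obtained by applying all preceding pivots. -/
def PivotsApplicable (G : SimpleGraph V) : List (V × V) → Prop
  | [] => True
  | p :: φ => G.Adj p.1 p.2 ∧ PivotsApplicable (G.pivot p.1 p.2) φ

/-- The support of a sequence of pivots: vertices occurring an odd number of times. -/
def pivotSupport (φ : List (V × V)) : Finset V :=
  Finset.univ.filter fun x => Odd ((φ.flatMap fun p => [p.1, p.2]).count x)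

/-- A sequence of pivots is reduced if its pivot vertices are pairwise distinct. -/
def ReducedSeq (φ : List (V × V)) : Prop := (φ.flatMap fun p => [p.1, p.2]).Nodup

/-- The number of perfect matchings of the subgraph of `G` induced by `S`:
sets of edges of `G` inside `S` such that every vertex of `S` lies in exactly one of them. -/
noncomputable def pmCount (G : SimpleGraph V) (S : Finset V) : ℕ := by
  classical
  exact (Finset.univ.filter fun P : Finset (Sym2 V) =>
    (∀ e ∈ P, e ∈ G.edgeSet ∧ ∀ v ∈ e, v ∈ S) ∧
    ∀ v ∈ S, ∃! e, e ∈ P ∧ v ∈ e).card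

/-!
Over GF(2) let `N = A + 1` be the closed-neighbourhood matrix of `G` and `P_S` the diagonal
projection onto `S`. The matrix `1 + N P_S` agrees with `A` in the columns of `S` and with the
identity elsewhere, so its determinant is `det A[S]`.

A pivot on an edge `uv` is the rank-two update `N' = N + n_u n_vᵀ + n_v n_uᵀ` (`n_w` the column
of `w` in `N`), and it exchanges the rows of `u` and `v`. Hence `K N' = N` for `K = 1 + N P_{u,v}`,
whose determinant is `det A[{u,v}] = 1`, and `K (1 + N' P_S) = 1 + N P_{S ∆ {u,v}}`. So the pivot
turns the minor at `S ∆ {u,v}` into the minor at `S`; along a sequence of pivots these sets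
accumulate into the support, and a two-vertex minor is `1` exactly on an edge.
-/

open Matrix
open scoped symmDiff

namespace Matrix

variable {n R : Type*} [Fintype n] [DecidableEq n] [CommRing R]

def coordProj (S : Finset n) : Matrix n n R := diagonal fun i => if i ∈ S then 1 else 0

theorem coordProj_symmDiff [CharP R 2] (S T : Finset n) :
    (coordProj (S ∆ T) : Matrix n n R) = coordProj S + coordProj T := by
  rw [coordProj, coordProj, coordProj, diagonal_add]
  congr 1
  ext i
  by_cases hS : i ∈ S <;> by_cases hT : i ∈ T <;>
    simp [Finset.mem_symmDiff, hS, hT, CharTwo.add_self_eq_zero]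

theorem det_one_add_mul_coordProj (M : Matrix n n R) (S : Finset n) :
    det (1 + M * coordProj S) = det ((1 + M).submatrix ((↑) : S → n) (↑)) := by
  have hzero : ∀ i ∈ S, ∀ j ∉ S, (1 + M * coordProj S : Matrix n n R) i j = 0 := by
    intro i hi j hj
    have hij : i ≠ j := by rintro rfl; exact hj hi
    simp [coordProj, one_apply_ne hij, hj]
  have hid : toSquareBlockProp (1 + M * coordProj S) (· ∉ S) = 1 := by
    ext i j
    simp [toSquareBlockProp, coordProj, one_apply, j.2, Subtype.ext_iff]
  have hS : toSquareBlockProp (1 + M * coordProj S) (· ∈ S) =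
      (1 + M).submatrix ((↑) : S → n) (↑) := by
    ext i j
    simp [toSquareBlockProp, coordProj, j.2]
  rw [twoBlockTriangular_det' _ (· ∈ S) hzero, hid, hS, det_one, mul_one]
  congr!

end Matrix

theorem ite_xor_eq_add (p q : Prop) [Decidable p] [Decidable q] :
    (if Xor p q then (1 : ZMod 2) else 0) = (if p then 1 else 0) + (if q then 1 else 0) := by
  by_cases hp : p <;> by_cases hq : q <;> simp [hp, hq]
  decide

namespace SimpleGraph

variable (G : SimpleGraph V)

theorem nbr_refl (x : V) : G.nbr x x := Or.inl rfl

theorem nbr_of_ne {x y : V} (hxy : x ≠ y) : G.nbr x y ↔ G.Adj x y := or_iff_right hxy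

theorem pivot_nbr_iff (u v x y : V) :
    (G.pivot u v).nbr x y ↔
      Xor (Xor (G.nbr x y) (G.nbr x u ∧ G.nbr y v)) (G.nbr x v ∧ G.nbr y u) := by
  rcases eq_or_ne x y with rfl | hxy
  · by_cases hu : G.nbr x u <;> by_cases hv : G.nbr x v <;> simp [nbr_refl, Xor, hu, hv]
  · rw [(G.pivot u v).nbr_of_ne hxy]
    exact and_iff_right hxy

open Classical in
noncomputable def nbrMatrix : Matrix V V (ZMod 2) :=
  Matrix.of fun x y => if G.nbr x y then 1 else 0

theorem nbrMatrix_of_nbr {x y : V} (h : G.nbr x y) : G.nbrMatrix x y = 1 := by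
  classical
  exact if_pos h

theorem nbrMatrix_comm (x y : V) : G.nbrMatrix x y = G.nbrMatrix y x := by
  classical
  simp only [nbrMatrix, of_apply]
  exact if_congr (G.nbr_comm x y) rfl rfl

theorem nbrMatrix_pivot_apply (u v x y : V) :
    (G.pivot u v).nbrMatrix x y =
      G.nbrMatrix x y + G.nbrMatrix x u * G.nbrMatrix y v +
        G.nbrMatrix x v * G.nbrMatrix y u := by
  classical
  simp only [nbrMatrix, of_apply, pivot_nbr_iff, ite_xor_eq_add, ite_zero_mul_ite_zero, one_mul]

theorem nbrMatrix_pivot_fst {u v : V} (h : G.Adj u v) (y : V) :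
    (G.pivot u v).nbrMatrix u y = G.nbrMatrix y v := by
  rw [nbrMatrix_pivot_apply, G.nbrMatrix_of_nbr (G.nbr_refl u), G.nbrMatrix_of_nbr (Or.inr h),
    nbrMatrix_comm]
  linear_combination G.nbrMatrix y u * CharTwo.two_eq_zero (R := ZMod 2)

theorem nbrMatrix_pivot_snd {u v : V} (h : G.Adj u v) (y : V) :
    (G.pivot u v).nbrMatrix v y = G.nbrMatrix y u := by
  rw [nbrMatrix_pivot_apply, G.nbrMatrix_of_nbr (G.nbr_refl v),
    G.nbrMatrix_of_nbr (Or.inr h.symm), nbrMatrix_comm]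
  linear_combination G.nbrMatrix y v * CharTwo.two_eq_zero (R := ZMod 2)

theorem mul_nbrMatrix_pivot {u v : V} (h : G.Adj u v) :
    (1 + G.nbrMatrix * coordProj {u, v}) * (G.pivot u v).nbrMatrix = G.nbrMatrix := by
  ext x y
  have hsum : ∑ k, (G.nbrMatrix * coordProj {u, v} : Matrix V V (ZMod 2)) x k *
      (G.pivot u v).nbrMatrix k y =
      G.nbrMatrix x u * G.nbrMatrix y v + G.nbrMatrix x v * G.nbrMatrix y u := by
    simp only [coordProj, mul_diagonal, mul_ite, mul_one, mul_zero, ite_mul, zero_mul,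
      Finset.sum_ite_mem, Finset.univ_inter, Finset.sum_pair h.ne, nbrMatrix_pivot_fst G h,
      nbrMatrix_pivot_snd G h]
  rw [Matrix.add_mul, Matrix.one_mul, Matrix.add_apply, mul_apply, hsum, nbrMatrix_pivot_apply]
  linear_combination (G.nbrMatrix x u * G.nbrMatrix y v + G.nbrMatrix x v * G.nbrMatrix y u) *
    CharTwo.two_eq_zero (R := ZMod 2)

open Classical in
theorem one_add_nbrMatrix :
    1 + G.nbrMatrix = Matrix.of fun x y => if G.Adj x y then 1 else 0 := by
  ext x y
  rcases eq_or_ne x y with rfl | hxy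
  · simp [nbrMatrix_of_nbr _ (G.nbr_refl x), CharTwo.add_self_eq_zero]
  · simp [nbrMatrix, one_apply_ne hxy, G.nbr_of_ne hxy]

theorem gdet_eq_det_one_add_nbrMatrix_mul_coordProj (S : Finset V) :
    gdet G S = det (1 + G.nbrMatrix * coordProj S) := by
  rw [det_one_add_mul_coordProj, one_add_nbrMatrix]
  rfl

theorem gdet_pair_eq_one_iff (x y : V) : gdet G {x, y} = 1 ↔ G.Adj x y := by
  rcases eq_or_ne x y with rfl | hxy
  · have hzero : gdet G {x, x} = 0 :=
      det_eq_zero_of_row_eq_zero ⟨x, by simp⟩ fun ⟨j, hj⟩ => by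
        obtain rfl : j = x := by simpa using hj
        simp
    rw [hzero]
    exact iff_of_false zero_ne_one G.irrefl
  · let e : Fin 2 ≃ ({x, y} : Finset V) :=
      Equiv.ofBijective ![⟨x, by simp⟩, ⟨y, by simp⟩] <| by
        rw [Fintype.bijective_iff_injective_and_card]
        refine ⟨fun i j hij => ?_, by
          rw [Fintype.card_fin, Fintype.card_coe, Finset.card_pair hxy]⟩
        fin_cases i <;> fin_cases j <;> simp_all [hxy.symm]
    rw [gdet, ← det_submatrix_equiv_self e, det_fin_two]
    by_cases hadj : G.Adj x y <;> simp [e, hadj, G.adj_comm y x]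

theorem gdet_pivot {u v : V} (h : G.Adj u v) (S : Finset V) :
    gdet (G.pivot u v) S = gdet G (S ∆ {u, v}) := by
  have hdet : det (1 + G.nbrMatrix * coordProj {u, v}) = 1 := by
    rw [← gdet_eq_det_one_add_nbrMatrix_mul_coordProj, gdet_pair_eq_one_iff]
    exact h
  simp only [gdet_eq_det_one_add_nbrMatrix_mul_coordProj]
  calc det (1 + (G.pivot u v).nbrMatrix * coordProj S)
      = det ((1 + G.nbrMatrix * coordProj {u, v}) *
          (1 + (G.pivot u v).nbrMatrix * coordProj S)) := by
        rw [det_mul, hdet, one_mul]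
    _ = det (1 + G.nbrMatrix * coordProj (S ∆ {u, v})) := by
        rw [mul_add, mul_one, ← Matrix.mul_assoc, mul_nbrMatrix_pivot G h, coordProj_symmDiff,
          Matrix.mul_add, add_assoc, add_comm (G.nbrMatrix * coordProj S)]

end SimpleGraph

theorem pivotSupport_cons {u v : V} (huv : u ≠ v) (φ : List (V × V)) :
    pivotSupport ((u, v) :: φ) = pivotSupport φ ∆ {u, v} := by
  ext z
  simp only [pivotSupport, Finset.mem_filter, Finset.mem_univ, true_and, Finset.mem_symmDiff,
    Finset.mem_insert, Finset.mem_singleton, List.flatMap_cons, List.count_append,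
    List.count_cons, List.count_nil, beq_iff_eq]
  generalize List.count z _ = c
  grind

theorem PivotsApplicable.gdet_applyPivots {G : SimpleGraph V} {φ : List (V × V)}
    (h : PivotsApplicable G φ) (T : Finset V) :
    gdet (applyPivots G φ) T = gdet G (pivotSupport φ ∆ T) := by
  induction φ generalizing G with
  | nil => simp [applyPivots, pivotSupport, ← Finset.bot_eq_empty]
  | cons p φ ih =>
    obtain ⟨hadj, hrest⟩ := h
    rw [applyPivots, ih hrest, G.gdet_pivot hadj, pivotSupport_cons hadj.ne, symmDiff_right_comm]

/-- If `φ` is applicable to `G` with support `S` and `x ≠ y`, then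
`det((Gφ)[{x,y}]) = det(G[S ⊕ {x,y}])`; consequently `{x,y} ∈ E(Gφ)` iff this value is `1`. -/
theorem gdet_applyPivots (G : SimpleGraph V) (φ : List (V × V)) (h : PivotsApplicable G φ)
    (x y : V) :
    gdet (applyPivots G φ) {x, y} = gdet G (symmDiff (pivotSupport φ) {x, y}) ∧
      ((applyPivots G φ).Adj x y ↔ gdet G (symmDiff (pivotSupport φ) {x, y}) = 1) := by
  rw [← h.gdet_applyPivots, SimpleGraph.gdet_pair_eq_one_iff]
  exact ⟨rfl, Iff.rfl⟩
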